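/- arXiv:2407.00730 — 2 statements merged into one kernel-verified Lean document; each statement's English description precedes it below -/
import Mathlib

section
/- Let z₁, z₂, z_I be standardized real random variables on a probability space with cov(z₁,z₂)=0 and cov(z_I,z₁)=cov(z_I,z₂)=0. Suppose c = a₁z₁ + a₂z₂ + a₃z_I for real coefficients a₁,a₂,a₃, and set dₖ = zₖ − c for k=1,2. If cov(c,d₁)=cov(c,d₂)=cov(d₁,d₂)=0, then c = 0 almost surely (equivalently Var(c)=0), and dₖ = zₖ almost surely for k=1,2. -/
open MeasureTheory

variable {Ω : Type*} {mΩ : MeasurableSpace Ω}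

/-- Covariance of two real-valued random variables `X, Y` under measure `μ`. -/
noncomputable def cov (μ : Measure Ω) (X Y : Ω → ℝ) : ℝ :=
  ∫ ω, (X ω - ∫ a, X a ∂μ) * (Y ω - ∫ a, Y a ∂μ) ∂μ

lemma int_mul (μ : Measure Ω) [IsProbabilityMeasure μ] {X Y : Ω → ℝ}
    (hX : MemLp X 2 μ) (hY : MemLp Y 2 μ) :
    Integrable (fun ω => X ω * Y ω) μ := by
  have := (hY.smul (q := 2) (r := 1) hX : MemLp (X • Y) 1 μ)
  rw [memLp_one_iff_integrable] at this
  simpa [Pi.smul_apply, smul_eq_mul, Pi.mul_def] using this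

/-- case `ρ = 0`: if `cov(z₁,z₂) = 0`, `c = a₁z₁ + a₂z₂ + a₃z_I`, and the
tri-orthogonality `cov(c,d₁) = cov(c,d₂) = cov(d₁,d₂) = 0` holds for `dₖ = zₖ − c`, then
`c = 0` almost surely (equivalently `Var(c) = 0`) and `dₖ = zₖ` almost surely. -/
theorem stmt4 (μ : Measure Ω) [IsProbabilityMeasure μ]
    (z₁ z₂ zI : Ω → ℝ)
    (hL₁ : MemLp z₁ 2 μ) (hL₂ : MemLp z₂ 2 μ) (hLI : MemLp zI 2 μ)
    (hm₁ : (∫ ω, z₁ ω ∂μ) = 0) (hm₂ : (∫ ω, z₂ ω ∂μ) = 0) (hmI : (∫ ω, zI ω ∂μ) = 0)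
    (hv₁ : cov μ z₁ z₁ = 1) (hv₂ : cov μ z₂ z₂ = 1) (hvI : cov μ zI zI = 1)
    (h12 : cov μ z₁ z₂ = 0)
    (hI1 : cov μ zI z₁ = 0) (hI2 : cov μ zI z₂ = 0)
    (a₁ a₂ a₃ : ℝ) (c d₁ d₂ : Ω → ℝ)
    (hc : c = fun ω => a₁ * z₁ ω + a₂ * z₂ ω + a₃ * zI ω)
    (hd₁ : d₁ = fun ω => z₁ ω - c ω) (hd₂ : d₂ = fun ω => z₂ ω - c ω)
    (hcd₁ : cov μ c d₁ = 0) (hcd₂ : cov μ c d₂ = 0) (hd₁d₂ : cov μ d₁ d₂ = 0) :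
    c =ᵐ[μ] (fun _ => 0) ∧ cov μ c c = 0 ∧ d₁ =ᵐ[μ] z₁ ∧ d₂ =ᵐ[μ] z₂ := by
  subst hd₁ hd₂ hc
  -- integrabilities
  have i₁ : Integrable z₁ μ := hL₁.integrable one_le_two
  have i₂ : Integrable z₂ μ := hL₂.integrable one_le_two
  have iI : Integrable zI μ := hLI.integrable one_le_two
  have p11 := int_mul μ hL₁ hL₁
  have p22 := int_mul μ hL₂ hL₂
  have pII := int_mul μ hLI hLI
  have p12 := int_mul μ hL₁ hL₂
  have pI1 := int_mul μ hLI hL₁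
  have pI2 := int_mul μ hLI hL₂
  -- product moments
  simp only [cov, hm₁, hm₂, hmI, sub_zero] at hv₁ hv₂ hvI h12 hI1 hI2
  -- mean of any linear combination is zero
  have hmean : ∀ α₁ α₂ α₃ : ℝ,
      (∫ ω, (α₁ * z₁ ω + α₂ * z₂ ω + α₃ * zI ω) ∂μ) = 0 := by
    intro α₁ α₂ α₃
    have h1 : Integrable (fun ω => α₁ * z₁ ω + α₂ * z₂ ω) μ :=
      (i₁.const_mul _).add (i₂.const_mul _)
    rw [integral_add h1 (iI.const_mul α₃), integral_add (i₁.const_mul α₁) (i₂.const_mul α₂),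
      integral_const_mul, integral_const_mul, integral_const_mul, hm₁, hm₂, hmI]
    ring
  have icomb : ∀ α₁ α₂ α₃ : ℝ,
      Integrable (fun ω => α₁ * z₁ ω + α₂ * z₂ ω + α₃ * zI ω) μ := fun α₁ α₂ α₃ =>
    ((i₁.const_mul α₁).add (i₂.const_mul α₂)).add (iI.const_mul α₃)
  -- the key bilinear computation
  have key : ∀ α₁ α₂ α₃ β₁ β₂ β₃ : ℝ,
      (∫ ω, (α₁ * z₁ ω + α₂ * z₂ ω + α₃ * zI ω) *
            (β₁ * z₁ ω + β₂ * z₂ ω + β₃ * zI ω) ∂μ)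
        = α₁ * β₁ + α₂ * β₂ + α₃ * β₃ := by
    intro α₁ α₂ α₃ β₁ β₂ β₃
    have expand : (fun ω => (α₁ * z₁ ω + α₂ * z₂ ω + α₃ * zI ω) *
            (β₁ * z₁ ω + β₂ * z₂ ω + β₃ * zI ω))
        = fun ω => α₁ * β₁ * (z₁ ω * z₁ ω) + α₂ * β₂ * (z₂ ω * z₂ ω)
            + α₃ * β₃ * (zI ω * zI ω) + (α₁ * β₂ + α₂ * β₁) * (z₁ ω * z₂ ω)
            + (α₁ * β₃ + α₃ * β₁) * (zI ω * z₁ ω)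
            + (α₂ * β₃ + α₃ * β₂) * (zI ω * z₂ ω) := by
      funext ω; ring
    have h2 : Integrable (fun ω => α₁ * β₁ * (z₁ ω * z₁ ω)
        + α₂ * β₂ * (z₂ ω * z₂ ω)) μ := (p11.const_mul _).add (p22.const_mul _)
    have h3 : Integrable (fun ω => α₁ * β₁ * (z₁ ω * z₁ ω)
        + α₂ * β₂ * (z₂ ω * z₂ ω) + α₃ * β₃ * (zI ω * zI ω)) μ := h2.add (pII.const_mul _)
    have h4 : Integrable (fun ω => α₁ * β₁ * (z₁ ω * z₁ ω)
        + α₂ * β₂ * (z₂ ω * z₂ ω) + α₃ * β₃ * (zI ω * zI ω)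
        + (α₁ * β₂ + α₂ * β₁) * (z₁ ω * z₂ ω)) μ := h3.add (p12.const_mul _)
    have h5 : Integrable (fun ω => α₁ * β₁ * (z₁ ω * z₁ ω)
        + α₂ * β₂ * (z₂ ω * z₂ ω) + α₃ * β₃ * (zI ω * zI ω)
        + (α₁ * β₂ + α₂ * β₁) * (z₁ ω * z₂ ω)
        + (α₁ * β₃ + α₃ * β₁) * (zI ω * z₁ ω)) μ := h4.add (pI1.const_mul _)
    rw [expand, integral_add h5 (pI2.const_mul _), integral_add h4 (pI1.const_mul _),
      integral_add h3 (p12.const_mul _), integral_add h2 (pII.const_mul _),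
      integral_add (p11.const_mul _) (p22.const_mul _),
      integral_const_mul, integral_const_mul, integral_const_mul, integral_const_mul,
      integral_const_mul, integral_const_mul, hv₁, hv₂, hvI, h12, hI1, hI2]
    ring
  -- means of d₁ and d₂ are zero
  have hdm₁ : (∫ a, (z₁ a - (a₁ * z₁ a + a₂ * z₂ a + a₃ * zI a)) ∂μ) = 0 := by
    rw [integral_sub i₁ (icomb a₁ a₂ a₃), hm₁, hmean]; ring
  have hdm₂ : (∫ a, (z₂ a - (a₁ * z₁ a + a₂ * z₂ a + a₃ * zI a)) ∂μ) = 0 := by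
    rw [integral_sub i₂ (icomb a₁ a₂ a₃), hm₂, hmean]; ring
  -- rewrite the three orthogonality hypotheses
  simp only [cov, hmean, hdm₁, hdm₂, sub_zero] at hcd₁ hcd₂ hd₁d₂
  have f₁ : (fun ω => (a₁ * z₁ ω + a₂ * z₂ ω + a₃ * zI ω) *
      (z₁ ω - (a₁ * z₁ ω + a₂ * z₂ ω + a₃ * zI ω)))
      = fun ω => (a₁ * z₁ ω + a₂ * z₂ ω + a₃ * zI ω) *
      ((1 - a₁) * z₁ ω + (-a₂) * z₂ ω + (-a₃) * zI ω) := by funext ω; ring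
  have f₂ : (fun ω => (a₁ * z₁ ω + a₂ * z₂ ω + a₃ * zI ω) *
      (z₂ ω - (a₁ * z₁ ω + a₂ * z₂ ω + a₃ * zI ω)))
      = fun ω => (a₁ * z₁ ω + a₂ * z₂ ω + a₃ * zI ω) *
      ((-a₁) * z₁ ω + (1 - a₂) * z₂ ω + (-a₃) * zI ω) := by funext ω; ring
  have f₃ : (fun ω => (z₁ ω - (a₁ * z₁ ω + a₂ * z₂ ω + a₃ * zI ω)) *
      (z₂ ω - (a₁ * z₁ ω + a₂ * z₂ ω + a₃ * zI ω)))
      = fun ω => ((1 - a₁) * z₁ ω + (-a₂) * z₂ ω + (-a₃) * zI ω) *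
      ((-a₁) * z₁ ω + (1 - a₂) * z₂ ω + (-a₃) * zI ω) := by funext ω; ring
  rw [f₁, key] at hcd₁
  rw [f₂, key] at hcd₂
  rw [f₃, key] at hd₁d₂
  -- solve for the coefficients
  have ha₁ : a₁ = 0 := by nlinarith [sq_nonneg a₁, sq_nonneg a₂, sq_nonneg a₃]
  have ha₂ : a₂ = 0 := by nlinarith [sq_nonneg a₁, sq_nonneg a₂, sq_nonneg a₃]
  have ha₃ : a₃ = 0 := by nlinarith [sq_nonneg a₁, sq_nonneg a₂, sq_nonneg a₃]
  subst ha₁ ha₂ ha₃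
  refine ⟨?_, ?_, ?_, ?_⟩
  · filter_upwards with ω; ring
  · simp [cov]
  · filter_upwards with ω; ring
  · filter_upwards with ω; ring
end

section
/- For each ℓ ∈ {1,…,r}, let z₁⁽ℓ⁾, z₂⁽ℓ⁾, z_I⁽ℓ⁾ be standardized real random variables on a common probability space such that: cov(zₖ⁽ℓ⁾, zₖ⁽ᵐ⁾) = 0 for ℓ≠m and k∈{1,2}; cov(z₁⁽ℓ⁾, z₂⁽ᵐ⁾) = ρ_ℓ if ℓ=m and 0 otherwise, with ρ_ℓ ∈ [0,1]; cov(z_I⁽ℓ⁾, z_I⁽ᵐ⁾) = 0 for ℓ≠m; and cov(z_I⁽ℓ⁾, zₖ⁽ᵐ⁾) = 0 for all ℓ,m,k. Define c⁽ℓ⁾ = (ρ_ℓ/(1+ρ_ℓ))(z₁⁽ℓ⁾+z₂⁽ℓ⁾) + √(ρ_ℓ(1−ρ_ℓ)/(1+ρ_ℓ))·z_I⁽ℓ⁾ and dₖ⁽ℓ⁾ = zₖ⁽ℓ⁾ − c⁽ℓ⁾ for k=1,2. Then: cov(c⁽ℓ⁾, c⁽ᵐ⁾) = ρ_ℓ if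 ℓ=m and 0 otherwise; cov(dₖ⁽ℓ⁾, dₖ⁽ᵐ⁾) = 1−ρ_ℓ if ℓ=m and 0 otherwise, for k=1,2; cov(d₁⁽ℓ⁾, d₂⁽ᵐ⁾) = 0 for all ℓ,m; and cov(c⁽ℓ⁾, dₖ⁽ᵐ⁾) = 0 for all ℓ,m and k=1,2. -/
open MeasureTheory

variable {Ω : Type*} {mΩ : MeasurableSpace Ω}

lemma myIntMul {μ : Measure Ω} {f g : Ω → ℝ} (hf : MemLp f 2 μ) (hg : MemLp g 2 μ) :
    Integrable (fun ω => f ω * g ω) μ := by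
  have h := L2.integrable_inner (𝕜 := ℝ) (hf.toLp f) (hg.toLp g)
  refine h.congr ?_
  filter_upwards [hf.coeFn_toLp, hg.coeFn_toLp] with ω h1 h2
  simp [h1, h2, RCLike.inner_apply, mul_comm]

/-- applying the two-variable D-CDLF decomposition to each of `r` pairs of
(augmented) canonical variables yields fully uncorrelated common and distinctive
latent factors, with `Var(c⁽ˡ⁾) = ρ_ℓ` and `Var(dₖ⁽ˡ⁾) = 1 − ρ_ℓ`. -/
theorem stmt7 (μ : Measure Ω) [IsProbabilityMeasure μ] {r : ℕ}
    (z₁ z₂ zI : Fin r → Ω → ℝ) (ρ : Fin r → ℝ)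
    (hL : ∀ l, MemLp (z₁ l) 2 μ ∧ MemLp (z₂ l) 2 μ ∧ MemLp (zI l) 2 μ)
    (hm : ∀ l, (∫ ω, z₁ l ω ∂μ) = 0 ∧ (∫ ω, z₂ l ω ∂μ) = 0 ∧ (∫ ω, zI l ω ∂μ) = 0)
    (hv : ∀ l, cov μ (z₁ l) (z₁ l) = 1 ∧ cov μ (z₂ l) (z₂ l) = 1 ∧
      cov μ (zI l) (zI l) = 1)
    (hρ : ∀ l, 0 ≤ ρ l ∧ ρ l ≤ 1)
    (hz₁z₁ : ∀ l m, l ≠ m → cov μ (z₁ l) (z₁ m) = 0)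
    (hz₂z₂ : ∀ l m, l ≠ m → cov μ (z₂ l) (z₂ m) = 0)
    (hz₁z₂ : ∀ l m, cov μ (z₁ l) (z₂ m) = if l = m then ρ l else 0)
    (hzIzI : ∀ l m, l ≠ m → cov μ (zI l) (zI m) = 0)
    (hzIz₁ : ∀ l m, cov μ (zI l) (z₁ m) = 0)
    (hzIz₂ : ∀ l m, cov μ (zI l) (z₂ m) = 0)
    (c d₁ d₂ : Fin r → Ω → ℝ)
    (hc : ∀ l, c l = fun ω => (ρ l / (1 + ρ l)) * (z₁ l ω + z₂ l ω)
        + Real.sqrt (ρ l * (1 - ρ l) / (1 + ρ l)) * zI l ω)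
    (hd₁ : ∀ l, d₁ l = fun ω => z₁ l ω - c l ω)
    (hd₂ : ∀ l, d₂ l = fun ω => z₂ l ω - c l ω) :
    (∀ l m, cov μ (c l) (c m) = if l = m then ρ l else 0) ∧
    (∀ l m, cov μ (d₁ l) (d₁ m) = if l = m then 1 - ρ l else 0) ∧
    (∀ l m, cov μ (d₂ l) (d₂ m) = if l = m then 1 - ρ l else 0) ∧
    (∀ l m, cov μ (d₁ l) (d₂ m) = 0) ∧
    (∀ l m, cov μ (c l) (d₁ m) = 0) ∧
    (∀ l m, cov μ (c l) (d₂ m) = 0) := by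
  have h1ρ : ∀ l, (0:ℝ) < 1 + ρ l := fun l => by linarith [(hρ l).1]
  have hne : ∀ l, (1 + ρ l) ≠ 0 := fun l => (h1ρ l).ne'
  have hB2 : ∀ l, Real.sqrt (ρ l * (1 - ρ l) / (1 + ρ l)) * Real.sqrt (ρ l * (1 - ρ l) / (1 + ρ l))
      = ρ l * (1 - ρ l) / (1 + ρ l) := fun l =>
    Real.mul_self_sqrt (div_nonneg (mul_nonneg (hρ l).1 (by linarith [(hρ l).2])) (h1ρ l).le)
  have covI : ∀ X Y : Ω → ℝ, (∫ a, X a ∂μ) = 0 → (∫ a, Y a ∂μ) = 0 →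
      cov μ X Y = ∫ ω, X ω * Y ω ∂μ := fun X Y hX hY => by simp [cov, hX, hY]
  have Icomm : ∀ X Y : Ω → ℝ, (∫ ω, X ω * Y ω ∂μ) = ∫ ω, Y ω * X ω ∂μ := by
    intro X Y; congr 1; ext ω; ring
  have swapif : ∀ (l m : Fin r) (f : Fin r → ℝ),
      (if m = l then f m else 0) = if l = m then f l else 0 := by
    intro l m f
    by_cases h : l = m
    · subst h; simp
    · simp [h, Ne.symm h]
  -- memℒp
  have hcL : ∀ l, MemLp (c l) 2 μ := fun l => by
    rw [hc l]
    exact (((hL l).1.add (hL l).2.1).const_mul _).add ((hL l).2.2.const_mul _)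
  -- means
  have imc : ∀ l, (∫ ω, c l ω ∂μ) = 0 := by
    intro l
    rw [hc l]
    have i1 : Integrable (fun ω => ρ l / (1 + ρ l) * (z₁ l ω + z₂ l ω)) μ :=
      (((hL l).1.integrable one_le_two).add ((hL l).2.1.integrable one_le_two)).const_mul _
    have i2 : Integrable (fun ω => Real.sqrt (ρ l * (1 - ρ l) / (1 + ρ l)) * zI l ω) μ :=
      ((hL l).2.2.integrable one_le_two).const_mul _
    rw [integral_add i1 i2, integral_const_mul, integral_const_mul,
      integral_add ((hL l).1.integrable one_le_two) ((hL l).2.1.integrable one_le_two),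
      (hm l).1, (hm l).2.1, (hm l).2.2]
    ring
  have imd₁ : ∀ l, (∫ ω, d₁ l ω ∂μ) = 0 := by
    intro l
    rw [hd₁ l, integral_sub ((hL l).1.integrable one_le_two) ((hcL l).integrable one_le_two),
      (hm l).1, imc l, sub_zero]
  have imd₂ : ∀ l, (∫ ω, d₂ l ω ∂μ) = 0 := by
    intro l
    rw [hd₂ l, integral_sub ((hL l).2.1.integrable one_le_two) ((hcL l).integrable one_le_two),
      (hm l).2.1, imc l, sub_zero]
  -- expansion of integrals against c
  have expand : ∀ (l : Fin r) (W : Ω → ℝ), MemLp W 2 μ →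
      (∫ ω, c l ω * W ω ∂μ) = ρ l / (1 + ρ l) * (∫ ω, z₁ l ω * W ω ∂μ)
        + ρ l / (1 + ρ l) * (∫ ω, z₂ l ω * W ω ∂μ)
        + Real.sqrt (ρ l * (1 - ρ l) / (1 + ρ l)) * (∫ ω, zI l ω * W ω ∂μ) := by
    intro l W hW
    have i1 := myIntMul (hL l).1 hW
    have i2 := myIntMul (hL l).2.1 hW
    have i3 := myIntMul (hL l).2.2 hW
    have key : (fun ω => c l ω * W ω)
        = fun ω => (ρ l / (1 + ρ l) * (z₁ l ω * W ω) + ρ l / (1 + ρ l) * (z₂ l ω * W ω))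
          + Real.sqrt (ρ l * (1 - ρ l) / (1 + ρ l)) * (zI l ω * W ω) := by
      funext ω; rw [hc l]; ring
    have j1 : Integrable (fun ω => ρ l / (1 + ρ l) * (z₁ l ω * W ω)
        + ρ l / (1 + ρ l) * (z₂ l ω * W ω)) μ := (i1.const_mul _).add (i2.const_mul _)
    have j2 : Integrable (fun ω => Real.sqrt (ρ l * (1 - ρ l) / (1 + ρ l)) * (zI l ω * W ω)) μ :=
      i3.const_mul _
    rw [key, integral_add j1 j2,
      integral_add (i1.const_mul (ρ l / (1 + ρ l))) (i2.const_mul (ρ l / (1 + ρ l))),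
      integral_const_mul, integral_const_mul, integral_const_mul]
  -- base integral values
  have I11 : ∀ l m, (∫ ω, z₁ l ω * z₁ m ω ∂μ) = if l = m then 1 else 0 := by
    intro l m
    rw [← covI _ _ (hm l).1 (hm m).1]
    by_cases h : l = m
    · subst h; simp [(hv l).1]
    · simp [h, hz₁z₁ l m h]
  have I22 : ∀ l m, (∫ ω, z₂ l ω * z₂ m ω ∂μ) = if l = m then 1 else 0 := by
    intro l m
    rw [← covI _ _ (hm l).2.1 (hm m).2.1]
    by_cases h : l = m
    · subst h; simp [(hv l).2.1]
    · simp [h, hz₂z₂ l m h]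
  have III : ∀ l m, (∫ ω, zI l ω * zI m ω ∂μ) = if l = m then 1 else 0 := by
    intro l m
    rw [← covI _ _ (hm l).2.2 (hm m).2.2]
    by_cases h : l = m
    · subst h; simp [(hv l).2.2]
    · simp [h, hzIzI l m h]
  have I12 : ∀ l m, (∫ ω, z₁ l ω * z₂ m ω ∂μ) = if l = m then ρ l else 0 := by
    intro l m
    rw [← covI _ _ (hm l).1 (hm m).2.1]; exact hz₁z₂ l m
  have I21 : ∀ l m, (∫ ω, z₂ l ω * z₁ m ω ∂μ) = if l = m then ρ l else 0 := by
    intro l m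
    rw [Icomm, I12 m l, swapif]
  have II1 : ∀ l m, (∫ ω, zI l ω * z₁ m ω ∂μ) = 0 := by
    intro l m
    rw [← covI _ _ (hm l).2.2 (hm m).1]; exact hzIz₁ l m
  have II2 : ∀ l m, (∫ ω, zI l ω * z₂ m ω ∂μ) = 0 := by
    intro l m
    rw [← covI _ _ (hm l).2.2 (hm m).2.1]; exact hzIz₂ l m
  have I1I : ∀ l m, (∫ ω, z₁ l ω * zI m ω ∂μ) = 0 := by
    intro l m; rw [Icomm]; exact II1 m l
  have I2I : ∀ l m, (∫ ω, z₂ l ω * zI m ω ∂μ) = 0 := by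
    intro l m; rw [Icomm]; exact II2 m l
  -- c against the z's
  have Ic1 : ∀ l m, (∫ ω, c l ω * z₁ m ω ∂μ) = if l = m then ρ l else 0 := by
    intro l m
    rw [expand l (z₁ m) (hL m).1, I11, I21, II1]
    by_cases h : l = m
    · subst h; simp only [eq_self_iff_true, if_true]
      have h0 := hne l
      field_simp
      ring
    · simp [h]
  have Ic2 : ∀ l m, (∫ ω, c l ω * z₂ m ω ∂μ) = if l = m then ρ l else 0 := by
    intro l m
    rw [expand l (z₂ m) (hL m).2.1, I12, I22, II2]
    by_cases h : l = m
    · subst h; simp only [eq_self_iff_true, if_true]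
      have h0 := hne l
      field_simp
      ring
    · simp [h]
  have IcI : ∀ l m, (∫ ω, c l ω * zI m ω ∂μ)
      = if l = m then Real.sqrt (ρ l * (1 - ρ l) / (1 + ρ l)) else 0 := by
    intro l m
    rw [expand l (zI m) (hL m).2.2, I1I, I2I, III]
    by_cases h : l = m
    · subst h; simp
    · simp [h]
  have I1c : ∀ l m, (∫ ω, z₁ l ω * c m ω ∂μ) = if l = m then ρ l else 0 := by
    intro l m; rw [Icomm, Ic1 m l, swapif]
  have I2c : ∀ l m, (∫ ω, z₂ l ω * c m ω ∂μ) = if l = m then ρ l else 0 := by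
    intro l m; rw [Icomm, Ic2 m l, swapif]
  have IIc : ∀ l m, (∫ ω, zI l ω * c m ω ∂μ)
      = if l = m then Real.sqrt (ρ l * (1 - ρ l) / (1 + ρ l)) else 0 := by
    intro l m
    rw [Icomm, IcI m l]
    by_cases h : l = m
    · subst h; simp
    · simp [h, Ne.symm h]
  -- c against c
  have Icc : ∀ l m, (∫ ω, c l ω * c m ω ∂μ) = if l = m then ρ l else 0 := by
    intro l m
    rw [expand l (c m) (hcL m), I1c, I2c, IIc]
    by_cases h : l = m
    · subst h; simp only [eq_self_iff_true, if_true]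
      rw [hB2 l]
      have h0 := hne l
      field_simp
      ring
    · simp [h]
  -- subtraction expansion
  have Isub : ∀ X C Y D : Ω → ℝ, MemLp X 2 μ → MemLp C 2 μ → MemLp Y 2 μ → MemLp D 2 μ →
      (∫ ω, (X ω - C ω) * (Y ω - D ω) ∂μ) = (∫ ω, X ω * Y ω ∂μ) - (∫ ω, X ω * D ω ∂μ)
        - (∫ ω, C ω * Y ω ∂μ) + (∫ ω, C ω * D ω ∂μ) := by
    intro X C Y D hX hC hY hD
    have iXY := myIntMul hX hY
    have iXD := myIntMul hX hD
    have iCY := myIntMul hC hY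
    have iCD := myIntMul hC hD
    have key : (fun ω => (X ω - C ω) * (Y ω - D ω))
        = fun ω => (X ω * Y ω - X ω * D ω) - (C ω * Y ω - C ω * D ω) := by
      funext ω; ring
    have j1 : Integrable (fun ω => X ω * Y ω - X ω * D ω) μ := iXY.sub iXD
    have j2 : Integrable (fun ω => C ω * Y ω - C ω * D ω) μ := iCY.sub iCD
    rw [key, integral_sub j1 j2, integral_sub iXY iXD, integral_sub iCY iCD]
    ring
  refine ⟨?_, ?_, ?_, ?_, ?_, ?_⟩
  · intro l m
    rw [covI _ _ (imc l) (imc m), Icc]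
  · intro l m
    rw [covI _ _ (imd₁ l) (imd₁ m)]
    simp only [hd₁]
    rw [Isub _ _ _ _ (hL l).1 (hcL l) (hL m).1 (hcL m), I11, I1c, Ic1, Icc]
    by_cases h : l = m <;> simp [h]
  · intro l m
    rw [covI _ _ (imd₂ l) (imd₂ m)]
    simp only [hd₂]
    rw [Isub _ _ _ _ (hL l).2.1 (hcL l) (hL m).2.1 (hcL m), I22, I2c, Ic2, Icc]
    by_cases h : l = m <;> simp [h]
  · intro l m
    rw [covI _ _ (imd₁ l) (imd₂ m)]
    simp only [hd₁, hd₂]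
    rw [Isub _ _ _ _ (hL l).1 (hcL l) (hL m).2.1 (hcL m), I12, I1c, Ic2, Icc]
    by_cases h : l = m <;> simp [h]
  · intro l m
    rw [covI _ _ (imc l) (imd₁ m)]
    simp only [hd₁]
    have key : (fun ω => c l ω * (z₁ m ω - c m ω))
        = fun ω => c l ω * z₁ m ω - c l ω * c m ω := by funext ω; ring
    rw [key, integral_sub (myIntMul (hcL l) (hL m).1) (myIntMul (hcL l) (hcL m)), Ic1, Icc]
    simp
  · intro l m
    rw [covI _ _ (imc l) (imd₂ m)]
    simp only [hd₂]
    have key : (fun ω => c l ω * (z₂ m ω - c m ω))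
        = fun ω => c l ω * z₂ m ω - c l ω * c m ω := by funext ω; ring
    rw [key, integral_sub (myIntMul (hcL l) (hL m).2.1) (myIntMul (hcL l) (hcL m)), Ic2, Icc]
    simp
end
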